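/- Let K(z) = e^{-z} for z > 0 and K(z) = 0 for z ≤ 0, and for λ > 0 set K_λ(z) = λK(λz). Let u : ℝ → ℝ be differentiable at every point with u ∈ L¹(ℝ) and u' ∈ L¹(ℝ), and let ρ : ℝ → ℝ be twice differentiable with ρ, ρ', ρ'' bounded. Then for every λ > 0: |∫_ℝ (λ²((K_λ*u)(x) − u(x)) + λ u'(x)) ρ(x) dx| ≤ ‖u‖_{L¹(ℝ)} · sup_{y∈ℝ} |ρ''(y)|. -/

import Mathlib

/-!
By Fubini and a translation, `∫ (K_λ * u) ρ = ∫ u (K̃_λ * ρ)`, and integrating by parts moves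
the derivative from `u` to `ρ`, so the integral equals `∫ u (λ² (K̃_λ * ρ - ρ) - λ ρ')`.
As `K_λ` is a probability density on `(0, ∞)` with moments `∫ K_λ(y) y dy = 1/λ` and
`∫ K_λ(y) y² dy = 2/λ²`, the Taylor bound `|ρ(w + y) - ρ(w) - ρ'(w) y| ≤ sup |ρ''| y² / 2`
shows that the bracket is bounded by `sup |ρ''|` pointwise.
-/

open MeasureTheory Set

noncomputable def expKernel (lam : ℝ) : ℝ → ℝ :=
  (Ioi 0).indicator fun z => lam * Real.exp (-(lam * z))

section expKernel

variable {lam : ℝ}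

lemma expKernel_nonneg (hlam : 0 ≤ lam) (z : ℝ) : 0 ≤ expKernel lam z :=
  indicator_nonneg (fun _ _ => by positivity) z

lemma expKernel_of_nonpos {z : ℝ} (hz : z ≤ 0) : expKernel lam z = 0 :=
  indicator_of_notMem (by simpa using hz) _

lemma expKernel_mul_pow (lam z : ℝ) (n : ℕ) :
    expKernel lam z * z ^ n =
      (Ioi 0).indicator (fun z => lam * (z ^ n * Real.exp (-(lam * z)))) z := by
  simp only [expKernel, indicator_apply]
  split_ifs <;> ring

lemma integrable_expKernel_mul_pow (hlam : 0 < lam) (n : ℕ) :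
    Integrable fun z => expKernel lam z * z ^ n := by
  simp_rw [expKernel_mul_pow, integrable_indicator_iff measurableSet_Ioi]
  refine .const_mul ((integrableOn_rpow_mul_exp_neg_mul_rpow (p := 1) (s := n)
    (by linarith [n.cast_nonneg (α := ℝ)]) one_pos hlam).congr_fun (fun z _ => ?_)
    measurableSet_Ioi) lam
  simp [Real.rpow_natCast]

lemma integral_expKernel_mul_pow (hlam : 0 < lam) (n : ℕ) :
    ∫ z, expKernel lam z * z ^ n = n.factorial / lam ^ n := by
  have h := Real.integral_rpow_mul_exp_neg_mul_Ioi (a := n + 1) (by positivity) hlam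
  rw [add_sub_cancel_right, Real.Gamma_nat_eq_factorial, Real.rpow_add_one (by positivity),
    Real.rpow_natCast] at h
  simp_rw [Real.rpow_natCast, one_div, inv_pow] at h
  simp_rw [expKernel_mul_pow, integral_indicator measurableSet_Ioi, integral_const_mul, h]
  field_simp

lemma integrable_expKernel (hlam : 0 < lam) : Integrable (expKernel lam) := by
  simpa using integrable_expKernel_mul_pow hlam 0

end expKernel

lemma abs_sub_sub_deriv_mul_le_half_mul_sq {ρ : ℝ → ℝ} (hρ : Differentiable ℝ ρ)
    (hρ' : Differentiable ℝ (deriv ρ)) {C : ℝ} (hC : ∀ y, |deriv (deriv ρ) y| ≤ C)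
    (w : ℝ) {y : ℝ} (hy : 0 ≤ y) :
    |ρ (w + y) - ρ w - deriv ρ w * y| ≤ C / 2 * y ^ 2 := by
  -- `ρ''` need not be continuous, so Taylor's theorem is replaced by fencing with `C t² / 2`.
  have hlip : ∀ t, |deriv ρ (w + t) - deriv ρ w| ≤ C * |t| := by
    intro t
    simpa [Real.norm_eq_abs] using Convex.norm_image_sub_le_of_norm_deriv_le
      (fun x _ => hρ' x) (fun x _ => hC x) convex_univ (mem_univ w) (mem_univ (w + t))
  have hφ : ∀ t, HasDerivAt (fun t => ρ (w + t) - ρ w - deriv ρ w * t)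
      (deriv ρ (w + t) - deriv ρ w) t := fun t =>
    ((((hρ (w + t)).hasDerivAt.comp_const_add w t).sub_const (ρ w)).sub
      ((hasDerivAt_id' t).const_mul (deriv ρ w))).congr_deriv (by ring)
  have hB : ∀ t, HasDerivAt (fun t : ℝ => C / 2 * t ^ 2) (C * t) t := fun t =>
    ((hasDerivAt_pow 2 t).const_mul (C / 2)).congr_deriv (by ring)
  refine image_norm_le_of_norm_deriv_right_le_deriv_boundary
    (fun t _ => (hφ t).continuousAt.continuousWithinAt) (fun t _ => (hφ t).hasDerivWithinAt)
    (by simp) hB (fun t ht => ?_) ⟨hy, le_rfl⟩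
  simpa [abs_of_nonneg ht.1] using hlip t

lemma abs_integral_mul_shift_sub_taylor_le {k ρ : ℝ → ℝ} {C : ℝ}
    (hk_nonneg : ∀ y, 0 ≤ k y) (hk_neg : ∀ y < 0, k y = 0) (hk : Integrable k)
    (hk₁ : Integrable fun y => k y * y) (hk₂ : Integrable fun y => k y * y ^ 2)
    (hρ : Differentiable ℝ ρ) (hρ' : Differentiable ℝ (deriv ρ))
    (hC : ∀ y, |deriv (deriv ρ) y| ≤ C) (w : ℝ) :
    |(∫ y, k y * ρ (w + y)) - (∫ y, k y) * ρ w - (∫ y, k y * y) * deriv ρ w|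
      ≤ C / 2 * ∫ y, k y * y ^ 2 := by
  set r : ℝ → ℝ := fun y => ρ (w + y) - ρ w - deriv ρ w * y
  have hr : ∀ y, ‖k y * r y‖ ≤ C / 2 * (k y * y ^ 2) := by
    intro y
    rcases lt_or_ge y 0 with hy | hy
    · simp [hk_neg y hy]
    · rw [Real.norm_eq_abs, abs_mul, abs_of_nonneg (hk_nonneg y), mul_left_comm]
      exact mul_le_mul_of_nonneg_left
        (abs_sub_sub_deriv_mul_le_half_mul_sq hρ hρ' hC w hy) (hk_nonneg y)
  have hkr : Integrable fun y => k y * r y :=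
    (hk₂.const_mul (C / 2)).mono' (hk.aestronglyMeasurable.mul
      (by have := hρ.continuous; fun_prop : Continuous r).aestronglyMeasurable) (ae_of_all _ hr)
  have hsplit : (fun y => k y * ρ (w + y)) =
      fun y => k y * r y + (k y * ρ w + k y * y * deriv ρ w) := by
    funext y
    ring
  rw [hsplit, integral_add hkr ((hk.mul_const _).fun_add (hk₁.mul_const _)),
    integral_add (hk.mul_const _) (hk₁.mul_const _), integral_mul_const, integral_mul_const,
    ← integral_const_mul]
  convert norm_integral_le_of_norm_le (hk₂.const_mul _) (ae_of_all _ hr) using 1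
  rw [Real.norm_eq_abs]
  ring_nf

lemma abs_sq_mul_integral_expKernel_shift_sub_le {ρ : ℝ → ℝ} {C lam : ℝ} (hlam : 0 < lam)
    (hρ : Differentiable ℝ ρ) (hρ' : Differentiable ℝ (deriv ρ))
    (hC : ∀ y, |deriv (deriv ρ) y| ≤ C) (w : ℝ) :
    |lam ^ 2 * ((∫ y, expKernel lam y * ρ (w + y)) - ρ w) - lam * deriv ρ w| ≤ C := by
  have h := abs_integral_mul_shift_sub_taylor_le (expKernel_nonneg hlam.le)
    (fun y hy => expKernel_of_nonpos hy.le) (integrable_expKernel hlam)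
    (by simpa using integrable_expKernel_mul_pow hlam 1) (integrable_expKernel_mul_pow hlam 2)
    hρ hρ' hC w
  have h₀ : ∫ y, expKernel lam y = 1 := by simpa using integral_expKernel_mul_pow hlam 0
  have h₁ : ∫ y, expKernel lam y * y = 1 / lam := by
    simpa using integral_expKernel_mul_pow hlam 1
  rw [h₀, h₁, integral_expKernel_mul_pow hlam 2] at h
  calc |lam ^ 2 * ((∫ y, expKernel lam y * ρ (w + y)) - ρ w) - lam * deriv ρ w|
      = |lam ^ 2 * ((∫ y, expKernel lam y * ρ (w + y)) - 1 * ρ w - 1 / lam * deriv ρ w)| := by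
        congr 1
        field_simp
    _ = lam ^ 2 * |(∫ y, expKernel lam y * ρ (w + y)) - 1 * ρ w - 1 / lam * deriv ρ w| := by
        rw [abs_mul, abs_of_pos (by positivity)]
    _ ≤ lam ^ 2 * (C / 2 * (Nat.factorial 2 / lam ^ 2)) := by gcongr
    _ = C := by
        field_simp
        norm_num

section Duality

variable {k u ρ : ℝ → ℝ} {M : ℝ}

lemma integrable_prod_mul_convolution (hk : Integrable k) (hu : Integrable u)
    (hρ : Measurable ρ) (hM : ∀ x, |ρ x| ≤ M) :
    Integrable (fun p : ℝ × ℝ => ρ p.1 * (k p.2 * u (p.1 - p.2))) (volume.prod volume) := by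
  refine Integrable.bdd_mul (c := M) ?_ (hρ.comp measurable_fst).aestronglyMeasurable
    (ae_of_all _ fun p => hM p.1)
  simpa using hk.convolution_integrand (ContinuousLinearMap.mul ℝ ℝ) hu

lemma integrable_prod_mul_shift (hk : Integrable k) (hu : Integrable u)
    (hρ : Measurable ρ) (hM : ∀ x, |ρ x| ≤ M) :
    Integrable (fun p : ℝ × ℝ => u p.1 * (k p.2 * ρ (p.1 + p.2))) (volume.prod volume) := by
  refine ((hu.mul_prod hk).bdd_mul (c := M) (hρ.comp measurable_add).aestronglyMeasurable
    (ae_of_all _ fun p => hM (p.1 + p.2))).congr (ae_of_all _ fun p => ?_)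
  simp only [Function.comp_apply]
  ring

lemma integrable_convolution_mul (hk : Integrable k) (hu : Integrable u)
    (hρ : Measurable ρ) (hM : ∀ x, |ρ x| ≤ M) :
    Integrable fun x => (∫ y, k y * u (x - y)) * ρ x := by
  refine (integrable_prod_mul_convolution hk hu hρ hM).integral_prod_left.congr
    (ae_of_all _ fun x => ?_)
  simp only [integral_const_mul, mul_comm]

lemma integrable_mul_integral_shift (hk : Integrable k) (hu : Integrable u)
    (hρ : Measurable ρ) (hM : ∀ x, |ρ x| ≤ M) :
    Integrable fun w => u w * ∫ y, k y * ρ (w + y) := by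
  refine (integrable_prod_mul_shift hk hu hρ hM).integral_prod_left.congr
    (ae_of_all _ fun x => ?_)
  simp only [integral_const_mul]

lemma integral_convolution_mul_eq_integral_mul_shift (hk : Integrable k) (hu : Integrable u)
    (hρ : Measurable ρ) (hM : ∀ x, |ρ x| ≤ M) :
    ∫ x, (∫ y, k y * u (x - y)) * ρ x = ∫ w, u w * ∫ y, k y * ρ (w + y) :=
  calc ∫ x, (∫ y, k y * u (x - y)) * ρ x
      = ∫ x, ∫ y, ρ x * (k y * u (x - y)) := by simp only [integral_const_mul, mul_comm]
    _ = ∫ y, ∫ x, ρ x * (k y * u (x - y)) :=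
        integral_integral_swap (integrable_prod_mul_convolution hk hu hρ hM)
    _ = ∫ y, ∫ w, u w * (k y * ρ (w + y)) := by
        congr 1
        funext y
        rw [← integral_add_right_eq_self _ y]
        simp only [add_sub_cancel_right]
        congr 1
        funext w
        ring
    _ = ∫ w, ∫ y, u w * (k y * ρ (w + y)) :=
        (integral_integral_swap (integrable_prod_mul_shift hk hu hρ hM)).symm
    _ = ∫ w, u w * ∫ y, k y * ρ (w + y) := by simp only [integral_const_mul]

end Duality

lemma integral_nonlocal_mul_eq_integral_mul_dual {k u ρ : ℝ → ℝ} {M M' : ℝ} (a b : ℝ)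
    (hk : Integrable k) (hu : Differentiable ℝ u) (hu₁ : Integrable u)
    (hu'₁ : Integrable (deriv u)) (hρ : Differentiable ℝ ρ) (hM : ∀ x, |ρ x| ≤ M)
    (hM' : ∀ x, |deriv ρ x| ≤ M') :
    ∫ x, (a * ((∫ y, k y * u (x - y)) - u x) + b * deriv u x) * ρ x
      = ∫ w, u w * (a * ((∫ y, k y * ρ (w + y)) - ρ w) - b * deriv ρ w) := by
  have hρm : Measurable ρ := hρ.continuous.measurable
  have huρ : Integrable fun x => u x * ρ x :=
    hu₁.mul_bdd hρm.aestronglyMeasurable (ae_of_all _ hM)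
  have hu'ρ : Integrable fun x => deriv u x * ρ x :=
    hu'₁.mul_bdd hρm.aestronglyMeasurable (ae_of_all _ hM)
  have huρ' : Integrable fun x => u x * deriv ρ x :=
    hu₁.mul_bdd (measurable_deriv ρ).aestronglyMeasurable (ae_of_all _ hM')
  have hconv := (integrable_convolution_mul hk hu₁ hρm hM).const_mul a
  have hshift := (integrable_mul_integral_shift hk hu₁ hρm hM).const_mul a
  have hconv_sub : Integrable fun x => a * ((∫ y, k y * u (x - y)) * ρ x) - a * (u x * ρ x) :=
    hconv.sub (huρ.const_mul a)
  have hshift_sub : Integrable fun w => a * (u w * ∫ y, k y * ρ (w + y)) - a * (u w * ρ w) :=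
    hshift.sub (huρ.const_mul a)
  have hparts : ∫ x, u x * deriv ρ x = -∫ x, deriv u x * ρ x :=
    integral_mul_deriv_eq_deriv_mul_of_integrable (fun x _ => (hu x).hasDerivAt)
      (fun x _ => (hρ x).hasDerivAt) huρ' hu'ρ huρ
  calc ∫ x, (a * ((∫ y, k y * u (x - y)) - u x) + b * deriv u x) * ρ x
      = ∫ x, (a * ((∫ y, k y * u (x - y)) * ρ x) - a * (u x * ρ x)
          + b * (deriv u x * ρ x)) := by
        congr 1
        funext x
        ring
    _ = a * (∫ x, (∫ y, k y * u (x - y)) * ρ x) - a * (∫ x, u x * ρ x)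
          + b * ∫ x, deriv u x * ρ x := by
        rw [integral_add hconv_sub (hu'ρ.const_mul b), integral_sub hconv (huρ.const_mul a),
          integral_const_mul, integral_const_mul, integral_const_mul]
    _ = a * (∫ w, u w * ∫ y, k y * ρ (w + y)) - a * (∫ w, u w * ρ w)
          - b * ∫ w, u w * deriv ρ w := by
        rw [integral_convolution_mul_eq_integral_mul_shift hk hu₁ hρm hM, hparts]
        ring
    _ = ∫ w, (a * (u w * ∫ y, k y * ρ (w + y)) - a * (u w * ρ w)
          - b * (u w * deriv ρ w)) := by
        rw [integral_sub hshift_sub (huρ'.const_mul b), integral_sub hshift (huρ.const_mul a),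
          integral_const_mul, integral_const_mul, integral_const_mul]
    _ = ∫ w, u w * (a * ((∫ y, k y * ρ (w + y)) - ρ w) - b * deriv ρ w) := by
        congr 1
        funext w
        ring

/-- For the rescaled kernel `K_λ(z) = λK(λz)` of `K(z) = e^{-z} 1_{z>0}`, a differentiable
`u` with `u, u' ∈ L¹(ℝ)`, and a twice differentiable `ρ` with `ρ, ρ', ρ''` bounded,
`|∫ (λ²(K_λ*u - u) + λu') ρ| ≤ ‖u‖_{L¹} sup_y |ρ''(y)|` for all `λ > 0`. -/
theorem abs_integral_rescaled_nonlocal_mul_test_le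
    (K : ℝ → ℝ) (hK : ∀ z : ℝ, K z = if 0 < z then Real.exp (-z) else 0)
    (Kl : ℝ → ℝ → ℝ) (hKl : ∀ lam z : ℝ, Kl lam z = lam * K (lam * z))
    (u : ℝ → ℝ) (hu : Differentiable ℝ u)
    (hu1 : Integrable u) (hu'1 : Integrable (deriv u))
    (ρ : ℝ → ℝ) (hρ : Differentiable ℝ ρ) (hρ' : Differentiable ℝ (deriv ρ))
    (hρbdd : BddAbove (Set.range fun y : ℝ => |ρ y|))
    (hρ'bdd : BddAbove (Set.range fun y : ℝ => |deriv ρ y|))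
    (hρ''bdd : BddAbove (Set.range fun y : ℝ => |deriv (deriv ρ) y|))
    (lam : ℝ) (hlam : 0 < lam) :
    |∫ x : ℝ,
        (lam ^ 2 * ((∫ y : ℝ, Kl lam y * u (x - y)) - u x) + lam * deriv u x) * ρ x|
      ≤ (∫ x : ℝ, |u x|) * ⨆ y : ℝ, |deriv (deriv ρ) y| := by
  have hKl_eq : Kl lam = expKernel lam := by
    funext z
    simp only [hKl, hK, expKernel, indicator_apply, mem_Ioi, mul_pos_iff_of_pos_left hlam]
    split_ifs <;> simp
  obtain ⟨M, hM⟩ := hρbdd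
  obtain ⟨M', hM'⟩ := hρ'bdd
  rw [hKl_eq, integral_nonlocal_mul_eq_integral_mul_dual _ _ (integrable_expKernel hlam) hu hu1
    hu'1 hρ (fun x => hM ⟨x, rfl⟩) (fun x => hM' ⟨x, rfl⟩),
    ← integral_mul_const, ← Real.norm_eq_abs]
  refine norm_integral_le_of_norm_le (hu1.abs.mul_const _) (ae_of_all _ fun w => ?_)
  rw [norm_mul, Real.norm_eq_abs]
  exact mul_le_mul_of_nonneg_left (abs_sq_mul_integral_expKernel_shift_sub_le hlam hρ hρ'
    (le_ciSup hρ''bdd) w) (abs_nonneg _)
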